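/- For the function B : Z_2^m → Z_2^m defined by B(x) = 0^{m-r}1^r where m-r is the position of the last (least significant) nonzero bit of x (and B(0^m) = 1^m), and with α_0, α_1, ..., α_{2^m-1} the binary representations of 0, 1, ..., 2^m-1 in order, the iterated XOR satisfies B(α_{k-1}) ⊕ B(α_{k-2}) ⊕ ... ⊕ B(α_0) ⊕ α_{k-1} = 1^m for every 1 ≤ k ≤ 2^m. -/

import Mathlib

/-- `B m x` : for `x ≠ 0`, the bit string whose `r` least significant bits are `1`,
where the least significant nonzero bit of `x` is at index `r - 1` from the LSB end
(i.e. position `m - r` from the MSB end); `B m 0 = 2^m - 1` (the all-ones string `1^m`).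
Here `r = (number of trailing zero bits of x) + 1 = padicValNat 2 x + 1`, and
`0^{m-r}1^r` is the number `2^r - 1`. -/
def B (m x : ℕ) : ℕ := if x = 0 then 2 ^ m - 1 else 2 ^ (padicValNat 2 x + 1) - 1

/-!
For `n ≠ 0`, subtracting one flips exactly the trailing zeros of `n` and its lowest one bit,
so `B m n = n ⊕ (n - 1)`. The XOR of `B m 0, …, B m (k - 1)` therefore telescopes to
`B m 0 ⊕ (k - 1) = 1^m ⊕ (k - 1)`.
-/

namespace Nat

theorem two_pow_mul_xor_sub_one_of_odd (v : ℕ) {b : ℕ} (hb : Odd b) :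
    2 ^ v * b ^^^ (2 ^ v * b - 1) = 2 ^ (v + 1) - 1 := by
  induction v with
  | zero => rw [pow_zero, one_mul, ← xor_one_of_odd hb, Nat.xor_xor_cancel_left]; rfl
  | succ v ih =>
    have hpos : 0 < 2 ^ v * b := mul_pos (Nat.two_pow_pos v) hb.pos
    have h_even : 2 ^ (v + 1) * b = bit false (2 ^ v * b) := by
      rw [bit_false_apply, pow_succ]; ring
    have h_pred : 2 ^ (v + 1) * b - 1 = bit true (2 ^ v * b - 1) := by
      rw [bit_true_apply, pow_succ, mul_right_comm]; omega
    rw [h_pred, h_even, xor_bit, ih, Bool.false_bne, bit_true_apply, pow_succ 2 (v + 1)]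
    have := Nat.two_pow_pos (v + 1)
    omega

theorem xor_sub_one_eq_two_pow_sub_one {n : ℕ} (hn : n ≠ 0) :
    n ^^^ (n - 1) = 2 ^ (padicValNat 2 n + 1) - 1 := by
  obtain ⟨v, b, hb, rfl⟩ := exists_eq_two_pow_mul_odd hn
  have hv : padicValNat 2 (2 ^ v * b) = v := by
    rw [padicValNat.mul (by positivity) hb.pos.ne', padicValNat.prime_pow,
      padicValNat.eq_zero_of_not_dvd hb.not_two_dvd_nat, add_zero]
  rw [hv, two_pow_mul_xor_sub_one_of_odd v hb]

theorem foldr_xor_eq_foldr_xor_zero_xor (l : List ℕ) (a : ℕ) :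
    l.foldr (· ^^^ ·) a = l.foldr (· ^^^ ·) 0 ^^^ a := by
  induction l with
  | nil => simp
  | cons x l ih => simp only [List.foldr_cons, ih, Nat.xor_assoc]

theorem foldr_xor_map_range_succ (f : ℕ → ℕ) (k : ℕ) :
    ((List.range (k + 1)).map f).foldr (· ^^^ ·) 0
      = ((List.range k).map f).foldr (· ^^^ ·) 0 ^^^ f k := by
  rw [List.range_succ, List.map_append, List.foldr_append, foldr_xor_eq_foldr_xor_zero_xor]
  simp

end Nat

theorem B_eq_xor_sub_one (m : ℕ) {n : ℕ} (hn : n ≠ 0) : B m n = n ^^^ (n - 1) := by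
  rw [B, if_neg hn, Nat.xor_sub_one_eq_two_pow_sub_one hn]

theorem foldr_xor_map_B_range_succ (m k : ℕ) :
    ((List.range (k + 1)).map (B m)).foldr (· ^^^ ·) 0 = (2 ^ m - 1) ^^^ k := by
  induction k with
  | zero => simp [B]
  | succ k ih =>
    rw [Nat.foldr_xor_map_range_succ, ih, B_eq_xor_sub_one m k.add_one_ne_zero,
      Nat.add_sub_cancel, Nat.xor_assoc, Nat.xor_comm (k + 1) k, Nat.xor_xor_cancel_left]

theorem iterated_xor_B_eq_all_ones_general (m k : ℕ) (hk1 : 1 ≤ k) :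
    ((List.range k).map (B m)).foldr (· ^^^ ·) 0 ^^^ (k - 1) = 2 ^ m - 1 := by
  obtain ⟨j, rfl⟩ := Nat.exists_eq_add_of_le' hk1
  rw [foldr_xor_map_B_range_succ, Nat.add_sub_cancel, Nat.xor_assoc, Nat.xor_self, Nat.xor_zero]

/-- For `α_j` the binary representation of `j` (`0 ≤ j < 2^m`) and every `1 ≤ k ≤ 2^m`,
`B(α_{k-1}) ⊕ B(α_{k-2}) ⊕ ⋯ ⊕ B(α_0) ⊕ α_{k-1} = 1^m`. -/
theorem iterated_xor_B_eq_all_ones (m k : ℕ) (hk1 : 1 ≤ k) (hk2 : k ≤ 2 ^ m) :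
    ((List.range k).map (B m)).foldr (· ^^^ ·) 0 ^^^ (k - 1) = 2 ^ m - 1 :=
  iterated_xor_B_eq_all_ones_general m k hk1
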